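/- Cheeger-type upper bound: for a reversible Markov chain with conductance h and second-largest eigenvalue μ₂, it holds that h²/2 ≤ 1 − μ₂. -/

import Mathlib

/-!
Take an eigenvector `f` for `μ₂ ≠ 1`. It is `π`-orthogonal to the constants, so, replacing `f` by
`-f` if necessary, its positive part `g = f⁺` is nonzero and supported on a set of `π`-mass at most
`1 / 2`. Where `g > 0` we have `P g ≥ P f = μ₂ f`, hence the Dirichlet form of `g` is at most
`(1 - μ₂) ‖g‖²`. The co-area formula for `g²`, whose level sets all have conductance at least `h`,
gives `2 h ‖g‖² ≤ ∑ π x P x y |g x² - g y²|`, and Cauchy–Schwarz with `|a² - b²| = |a - b| |a + b|`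
bounds this sum by `√(2 (1 - μ₂) ‖g‖² · 4 ‖g‖²)`.
-/

open Matrix Finset MeasureTheory

section Coarea

variable {ι : Type*} [Fintype ι]

lemma integrable_indicator_Ico_const (a b c : ℝ) :
    Integrable ((Set.Ico a b).indicator fun _ => c) :=
  (integrable_indicator_iff measurableSet_Ico).2 (integrableOn_const (by simp))

lemma integral_indicator_Ico_const (a b c : ℝ) :
    ∫ t, (Set.Ico a b).indicator (fun _ => c) t = max (b - a) 0 * c := by
  rw [integral_indicator_const _ measurableSet_Ico, measureReal_def, Real.volume_Ico,
    ENNReal.toReal_ofReal', smul_eq_mul]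

lemma sum_indicator_Ico_zero_eq_sum_filter (π φ : ι → ℝ) {t : ℝ} (ht : 0 ≤ t) :
    ∑ z, (Set.Ico 0 (φ z)).indicator (fun _ => π z) t = ∑ z ∈ univ.filter (t < φ ·), π z := by
  simp [Set.indicator_apply, sum_filter, ht]

variable [DecidableEq ι]

lemma sum_indicator_Ico_eq_sum_cut (Q : ι → ι → ℝ) (φ : ι → ℝ) (t : ℝ) :
    ∑ x, ∑ y, (Set.Ico (φ y) (φ x)).indicator (fun _ => Q x y) t
      = ∑ x ∈ univ.filter (t < φ ·), ∑ y ∈ (univ.filter (t < φ ·))ᶜ, Q x y := by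
  simp only [compl_filter, not_lt, sum_filter, Set.indicator_apply, Set.mem_Ico]
  refine sum_congr rfl fun x _ => ?_
  split_ifs with hx <;> simp [hx]

/-- Co-area formula: integrate the cut inequality for the level sets `{φ > t}` over `t ≥ 0`. -/
theorem mul_sum_le_sum_max_sub_of_cut (π φ : ι → ℝ) (Q : ι → ι → ℝ) {h : ℝ}
    (hφ : ∀ x, 0 ≤ φ x) (hsupp : ∑ i ∈ univ.filter (0 < φ ·), π i ≤ 1 / 2)
    (hπ : ∀ i, 0 ≤ π i)
    (hcut : ∀ T : Finset ι, ∑ i ∈ T, π i ≤ 1 / 2 → h * ∑ i ∈ T, π i ≤ ∑ x ∈ T, ∑ y ∈ Tᶜ, Q x y) :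
    h * ∑ z, π z * φ z ≤ ∑ x, ∑ y, Q x y * max (φ x - φ y) 0 := by
  have hlevel : ∀ t, h * ∑ z, (Set.Ico 0 (φ z)).indicator (fun _ => π z) t
      ≤ ∑ x, ∑ y, (Set.Ico (φ y) (φ x)).indicator (fun _ => Q x y) t := by
    intro t
    rw [sum_indicator_Ico_eq_sum_cut]
    rcases lt_or_ge t 0 with ht | ht
    · have hT : univ.filter (t < φ ·) = univ := filter_true_of_mem fun z _ => ht.trans_le (hφ z)
      simp [hT, Set.indicator_of_notMem, ht.not_ge]
    · rw [sum_indicator_Ico_zero_eq_sum_filter _ _ ht]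
      refine hcut _ (le_trans (sum_le_sum_of_subset_of_nonneg ?_ fun i _ _ => hπ i) hsupp)
      exact monotone_filter_right _ fun z _ hz => ht.trans_lt hz
  calc h * ∑ z, π z * φ z
      = ∫ t, h * ∑ z, (Set.Ico 0 (φ z)).indicator (fun _ => π z) t := by
        rw [integral_const_mul, integral_finsetSum _ fun z _ => integrable_indicator_Ico_const ..]
        simp only [integral_indicator_Ico_const, sub_zero, max_eq_left (hφ _), mul_comm]
    _ ≤ ∫ t, ∑ x, ∑ y, (Set.Ico (φ y) (φ x)).indicator (fun _ => Q x y) t :=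
        integral_mono
          ((integrable_finsetSum _ fun z _ => integrable_indicator_Ico_const ..).const_mul h)
          (integrable_finsetSum _ fun x _ =>
            integrable_finsetSum _ fun y _ => integrable_indicator_Ico_const ..) hlevel
    _ = ∑ x, ∑ y, Q x y * max (φ x - φ y) 0 := by
        rw [integral_finsetSum _ fun x _ =>
          integrable_finsetSum _ fun y _ => integrable_indicator_Ico_const ..]
        simp only [integral_finsetSum _ fun y _ => integrable_indicator_Ico_const ..,
          integral_indicator_Ico_const, mul_comm]

end Coarea

section Reversible

variable {ι : Type*} [Fintype ι] {π : ι → ℝ} {P : Matrix ι ι ℝ}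

lemma sum_mul_mulVec (c w : ι → ℝ) :
    ∑ x, c x * (P *ᵥ w) x = ∑ x, ∑ y, c x * P x y * w y := by
  simp only [mulVec, dotProduct, mul_sum, mul_assoc]

lemma sum_sum_mul_left (hProw : ∀ i, ∑ j, P i j = 1) (w : ι → ℝ) :
    ∑ x, ∑ y, π x * P x y * w x = ∑ x, π x * w x := by
  simp only [mul_right_comm _ _ (w _), ← mul_sum, hProw, mul_one]

lemma sum_mul_apply_eq_of_reversible (hProw : ∀ i, ∑ j, P i j = 1)
    (hrev : ∀ i j, π i * P i j = π j * P j i) (y : ι) :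
    ∑ x, π x * P x y = π y := by
  simp only [hrev _ y, ← mul_sum, hProw, mul_one]

lemma sum_sum_mul_right (hstat : ∀ y, ∑ x, π x * P x y = π y) (w : ι → ℝ) :
    ∑ x, ∑ y, π x * P x y * w y = ∑ x, π x * w x := by
  rw [sum_comm]
  simp only [← sum_mul, hstat]

lemma sum_mul_mulVec_of_stationary (hstat : ∀ y, ∑ x, π x * P x y = π y) (w : ι → ℝ) :
    ∑ x, π x * (P *ᵥ w) x = ∑ x, π x * w x := by
  rw [sum_mul_mulVec, sum_sum_mul_right hstat]

lemma sum_sum_mul_sub_sq (hProw : ∀ i, ∑ j, P i j = 1)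
    (hstat : ∀ y, ∑ x, π x * P x y = π y) (g : ι → ℝ) :
    ∑ x, ∑ y, π x * P x y * (g x - g y) ^ 2
      = 2 * ∑ x, π x * (g x * (g x - (P *ᵥ g) x)) := by
  have hcross := sum_mul_mulVec (P := P) (fun x => π x * g x) g
  have hleft := sum_sum_mul_left (π := π) hProw (fun x => g x ^ 2)
  have hright := sum_sum_mul_right hstat (fun x => g x ^ 2)
  calc ∑ x, ∑ y, π x * P x y * (g x - g y) ^ 2
      = ∑ x, ∑ y, π x * P x y * g x ^ 2 + ∑ x, ∑ y, π x * P x y * g y ^ 2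
          - 2 * ∑ x, ∑ y, π x * g x * P x y * g y := by
        simp only [mul_sum, ← sum_add_distrib, ← sum_sub_distrib]
        exact sum_congr rfl fun x _ => sum_congr rfl fun y _ => by ring
    _ = 2 * ∑ x, π x * (g x * (g x - (P *ᵥ g) x)) := by
        rw [hleft, hright, ← hcross, mul_sum, mul_sum, ← sum_add_distrib, ← sum_sub_distrib]
        exact sum_congr rfl fun x _ => by ring

lemma sum_sum_mul_add_sq_le (hπ : ∀ i, 0 ≤ π i) (hP : ∀ i j, 0 ≤ P i j)
    (hProw : ∀ i, ∑ j, P i j = 1) (hstat : ∀ y, ∑ x, π x * P x y = π y) (g : ι → ℝ) :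
    ∑ x, ∑ y, π x * P x y * (g x + g y) ^ 2 ≤ 4 * ∑ x, π x * g x ^ 2 := by
  calc ∑ x, ∑ y, π x * P x y * (g x + g y) ^ 2
      ≤ ∑ x, ∑ y, (2 * (π x * P x y * g x ^ 2) + 2 * (π x * P x y * g y ^ 2)) := by
        gcongr with x _ y _
        nlinarith [mul_nonneg (mul_nonneg (hπ x) (hP x y)) (sq_nonneg (g x - g y))]
    _ = 4 * ∑ x, π x * g x ^ 2 := by
        simp only [sum_add_distrib, ← mul_sum]
        rw [sum_sum_mul_left hProw (fun x => g x ^ 2), sum_sum_mul_right hstat (fun x => g x ^ 2)]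
        ring

lemma max_mul_sub_mulVec_le (hP : ∀ i j, 0 ≤ P i j) {f : ι → ℝ} {μ : ℝ} (hf : P *ᵥ f = μ • f)
    (x : ι) :
    max (f x) 0 * (max (f x) 0 - (P *ᵥ fun y => max (f y) 0) x) ≤ (1 - μ) * max (f x) 0 ^ 2 := by
  rcases le_or_gt (f x) 0 with hx | hx
  · simp [max_eq_right hx]
  · have hmono : μ * f x ≤ (P *ᵥ fun y => max (f y) 0) x :=
      calc μ * f x = (P *ᵥ f) x := by simp [hf]
        _ ≤ _ := sum_le_sum fun y _ => mul_le_mul_of_nonneg_left (le_max_left _ _) (hP x y)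
    rw [max_eq_left hx.le]
    nlinarith

lemma sum_sum_mul_sub_sq_max_le (hπ : ∀ i, 0 ≤ π i) (hP : ∀ i j, 0 ≤ P i j)
    (hProw : ∀ i, ∑ j, P i j = 1) (hstat : ∀ y, ∑ x, π x * P x y = π y) {f : ι → ℝ} {μ : ℝ}
    (hf : P *ᵥ f = μ • f) :
    ∑ x, ∑ y, π x * P x y * (max (f x) 0 - max (f y) 0) ^ 2
      ≤ 2 * ((1 - μ) * ∑ x, π x * max (f x) 0 ^ 2) := by
  rw [sum_sum_mul_sub_sq hProw hstat, mul_sum _ _ (1 - μ)]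
  refine mul_le_mul_of_nonneg_left (sum_le_sum fun x _ => ?_) zero_le_two
  linarith [mul_le_mul_of_nonneg_left (max_mul_sub_mulVec_le hP hf x) (hπ x)]

end Reversible

section WeightedSums

variable {κ : Type*} [Fintype κ] (Q : κ → κ → ℝ)

lemma sum_sum_mul_abs_sub_eq (hQ : ∀ x y, Q x y = Q y x) (φ : κ → ℝ) :
    ∑ x, ∑ y, Q x y * |φ x - φ y| = 2 * ∑ x, ∑ y, Q x y * max (φ x - φ y) 0 := by
  have hswap : ∑ x, ∑ y, Q x y * max (-(φ x - φ y)) 0 = ∑ x, ∑ y, Q x y * max (φ x - φ y) 0 := by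
    rw [sum_comm]
    exact sum_congr rfl fun y _ => sum_congr rfl fun x _ => by rw [hQ, neg_sub]
  simp only [← max_zero_add_max_neg_zero_eq_abs_self, mul_add, sum_add_distrib, hswap]
  ring

lemma sq_sum_sum_mul_abs_sq_sub_sq_le (hQ : ∀ x y, 0 ≤ Q x y) (g : κ → ℝ) :
    (∑ x, ∑ y, Q x y * |g x ^ 2 - g y ^ 2|) ^ 2
      ≤ (∑ x, ∑ y, Q x y * (g x - g y) ^ 2) * ∑ x, ∑ y, Q x y * (g x + g y) ^ 2 := by
  simp only [← Fintype.sum_prod_type']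
  refine sum_sq_le_sum_mul_sum_of_sq_le_mul _ (fun p _ => mul_nonneg (hQ _ _) (sq_nonneg _))
    (fun p _ => mul_nonneg (hQ _ _) (sq_nonneg _)) fun p _ => le_of_eq ?_
  rw [mul_pow, sq_abs]
  ring

end WeightedSums

section Spectral

variable {ι : Type*} [Fintype ι] {π : ι → ℝ} {P : Matrix ι ι ℝ}

lemma sum_mul_eq_zero_of_mulVec_eq_smul (hstat : ∀ y, ∑ x, π x * P x y = π y) {f : ι → ℝ}
    {μ : ℝ} (hμ : μ ≠ 1) (hf : P *ᵥ f = μ • f) : ∑ x, π x * f x = 0 := by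
  have h := sum_mul_mulVec_of_stationary hstat f
  simp only [hf, Pi.smul_apply, smul_eq_mul, mul_left_comm _ μ, ← mul_sum] at h
  by_contra hne
  exact hμ ((mul_eq_right₀ hne).1 h)

lemma exists_pos_of_sum_mul_eq_zero (hπ : ∀ i, 0 < π i) {f : ι → ℝ} (hf : f ≠ 0)
    (hsum : ∑ x, π x * f x = 0) : ∃ x, 0 < f x := by
  by_contra! hle
  obtain ⟨z, hz⟩ := Function.ne_iff.1 hf
  have : ∑ x, π x * f x < 0 :=
    sum_neg' (fun i _ => mul_nonpos_of_nonneg_of_nonpos (hπ i).le (hle i))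
      ⟨z, mem_univ z, mul_neg_of_pos_of_neg (hπ z) ((hle z).lt_of_ne hz)⟩
  linarith

variable [DecidableEq ι]

lemma exists_mulVec_eq_smul_mass_pos_le_half (hπ : ∀ i, 0 < π i) (hπsum : ∑ i, π i = 1)
    (hstat : ∀ y, ∑ x, π x * P x y = π y) {μ : ℝ} (hμ : μ ≠ 1) {f : ι → ℝ} (hf0 : f ≠ 0)
    (hf : P *ᵥ f = μ • f) :
    ∃ g : ι → ℝ, P *ᵥ g = μ • g ∧ (∃ x, 0 < g x) ∧ ∑ i ∈ univ.filter (0 < g ·), π i ≤ 1 / 2 := by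
  have hneg : P *ᵥ -f = μ • -f := by rw [mulVec_neg, hf, smul_neg]
  have hmass : ∑ i ∈ univ.filter (0 < f ·), π i + ∑ i ∈ univ.filter (0 < (-f) ·), π i ≤ 1 := by
    have hdisj : Disjoint (univ.filter (0 < f ·)) (univ.filter (0 < (-f) ·)) :=
      disjoint_filter.2 fun i _ h₁ h₂ => by simp only [Pi.neg_apply] at h₂; linarith
    rw [← sum_union hdisj, ← hπsum]
    exact sum_le_sum_of_subset_of_nonneg (subset_univ _) fun i _ _ => (hπ i).le
  rcases le_or_gt (∑ i ∈ univ.filter (0 < f ·), π i) (1 / 2) with hle | hgt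
  · exact ⟨f, hf, exists_pos_of_sum_mul_eq_zero hπ hf0
      (sum_mul_eq_zero_of_mulVec_eq_smul hstat hμ hf), hle⟩
  · exact ⟨-f, hneg, exists_pos_of_sum_mul_eq_zero hπ (neg_ne_zero.2 hf0)
      (sum_mul_eq_zero_of_mulVec_eq_smul hstat hμ hneg), by linarith⟩

def cutRatios (π : ι → ℝ) (P : Matrix ι ι ℝ) : Set ℝ :=
  {x | ∃ S : Finset ι, S.Nonempty ∧ ∑ i ∈ S, π i ≤ 1 / 2 ∧
    x = (∑ i ∈ S, ∑ j ∈ Sᶜ, π i * P i j) / ∑ i ∈ S, π i}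

lemma nonneg_of_mem_cutRatios (hπ : ∀ i, 0 ≤ π i) (hP : ∀ i j, 0 ≤ P i j) {x : ℝ}
    (hx : x ∈ cutRatios π P) : 0 ≤ x := by
  obtain ⟨S, -, -, rfl⟩ := hx
  exact div_nonneg (sum_nonneg fun i _ => sum_nonneg fun j _ => mul_nonneg (hπ i) (hP i j))
    (sum_nonneg fun i _ => hπ i)

lemma mul_sum_le_sum_cut_of_mem_lowerBounds (hπ : ∀ i, 0 < π i) {h : ℝ}
    (hh : h ∈ lowerBounds (cutRatios π P)) (T : Finset ι) (hT : ∑ i ∈ T, π i ≤ 1 / 2) :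
    h * ∑ i ∈ T, π i ≤ ∑ i ∈ T, ∑ j ∈ Tᶜ, π i * P i j := by
  rcases T.eq_empty_or_nonempty with rfl | hne
  · simp
  have hpos : 0 < ∑ i ∈ T, π i := sum_pos (fun i _ => hπ i) hne
  calc h * ∑ i ∈ T, π i ≤ (∑ i ∈ T, ∑ j ∈ Tᶜ, π i * P i j) / (∑ i ∈ T, π i) * ∑ i ∈ T, π i := by
        gcongr
        exact hh ⟨T, hne, hT, rfl⟩
    _ = ∑ i ∈ T, ∑ j ∈ Tᶜ, π i * P i j := div_mul_cancel₀ _ hpos.ne'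

theorem sq_div_two_le_one_sub_of_mulVec_eq_smul (hπ : ∀ i, 0 < π i) (hP : ∀ i j, 0 ≤ P i j)
    (hProw : ∀ i, ∑ j, P i j = 1) (hrev : ∀ i j, π i * P i j = π j * P j i) {h : ℝ}
    (hh : 0 ≤ h)
    (hcut : ∀ T : Finset ι, ∑ i ∈ T, π i ≤ 1 / 2 →
      h * ∑ i ∈ T, π i ≤ ∑ x ∈ T, ∑ y ∈ Tᶜ, π x * P x y)
    {f : ι → ℝ} {μ : ℝ} (hf : P *ᵥ f = μ • f) (hfpos : ∃ x, 0 < f x)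
    (hsupp : ∑ i ∈ univ.filter (0 < f ·), π i ≤ 1 / 2) :
    h ^ 2 / 2 ≤ 1 - μ := by
  set g : ι → ℝ := fun x => max (f x) 0
  have hstat := sum_mul_apply_eq_of_reversible hProw hrev
  set N := ∑ x, π x * g x ^ 2
  have hN : 0 < N := by
    obtain ⟨x, hx⟩ := hfpos
    exact sum_pos' (fun i _ => mul_nonneg (hπ i).le (sq_nonneg _))
      ⟨x, mem_univ x, mul_pos (hπ x) (pow_pos (lt_max_of_lt_left hx) 2)⟩
  set A := ∑ x, ∑ y, π x * P x y * |g x ^ 2 - g y ^ 2|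
  have hA : 2 * (h * N) ≤ A := by
    have hsupp' : ∑ i ∈ univ.filter (0 < g · ^ 2), π i ≤ 1 / 2 := by
      convert hsupp using 3 with x
      simp [g, sq_pos_iff]
    have := mul_sum_le_sum_max_sub_of_cut π (g · ^ 2) (fun x y => π x * P x y)
      (fun x => sq_nonneg _) hsupp' (fun i => (hπ i).le) hcut
    have := sum_sum_mul_abs_sub_eq (fun x y => π x * P x y) hrev (g · ^ 2)
    linarith
  have hE : ∑ x, ∑ y, π x * P x y * (g x - g y) ^ 2 ≤ 2 * ((1 - μ) * N) :=
    sum_sum_mul_sub_sq_max_le (fun i => (hπ i).le) hP hProw hstat hf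
  have hQ : ∀ x y, 0 ≤ π x * P x y := fun x y => mul_nonneg (hπ x).le (hP x y)
  have hEnn : 0 ≤ ∑ x, ∑ y, π x * P x y * (g x - g y) ^ 2 :=
    sum_nonneg fun x _ => sum_nonneg fun y _ => mul_nonneg (hQ x y) (sq_nonneg _)
  have hSnn : 0 ≤ ∑ x, ∑ y, π x * P x y * (g x + g y) ^ 2 :=
    sum_nonneg fun x _ => sum_nonneg fun y _ => mul_nonneg (hQ x y) (sq_nonneg _)
  have hsq : h ^ 2 * (4 * N ^ 2) ≤ 2 * (1 - μ) * (4 * N ^ 2) :=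
    calc h ^ 2 * (4 * N ^ 2) = (2 * (h * N)) ^ 2 := by ring
      _ ≤ A ^ 2 := by gcongr
      _ ≤ (∑ x, ∑ y, π x * P x y * (g x - g y) ^ 2) * ∑ x, ∑ y, π x * P x y * (g x + g y) ^ 2 :=
          sq_sum_sum_mul_abs_sq_sub_sq_le (fun x y => π x * P x y) hQ g
      _ ≤ 2 * ((1 - μ) * N) * (4 * N) :=
          mul_le_mul hE (sum_sum_mul_add_sq_le (fun i => (hπ i).le) hP hProw hstat g) hSnn
            (hEnn.trans hE)
      _ = 2 * (1 - μ) * (4 * N ^ 2) := by ring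
  linarith [le_of_mul_le_mul_right hsq (by positivity)]

end Spectral

theorem cheeger_upper_general {n : ℕ} (P : Matrix (Fin n) (Fin n) ℝ)
    (π : Fin n → ℝ) (hπpos : ∀ i, 0 < π i) (hπsum : ∑ i, π i = 1)
    (hPnn : ∀ i j, 0 ≤ P i j) (hProw : ∀ i, ∑ j, P i j = 1)
    (hrev : ∀ i j, π i * P i j = π j * P j i)
    (h : ℝ)
    (hcond : IsLeast {x : ℝ | ∃ S : Finset (Fin n), S.Nonempty ∧ (∑ i ∈ S, π i) ≤ 1/2 ∧
      x = (∑ i ∈ S, ∑ j ∈ Sᶜ, π i * P i j) / ∑ i ∈ S, π i} h)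
    (μ₂ : ℝ)
    (hμ : IsGreatest {μ : ℝ | (∃ v : Fin n → ℝ, v ≠ 0 ∧ P.mulVec v = μ • v) ∧ μ ≠ 1} μ₂) :
    h ^ 2 / 2 ≤ 1 - μ₂ := by
  obtain ⟨⟨f, hf0, hf⟩, hμ₂⟩ := hμ.1
  obtain ⟨g, hg, hgpos, hgsupp⟩ := exists_mulVec_eq_smul_mass_pos_le_half hπpos hπsum
    (sum_mul_apply_eq_of_reversible hProw hrev) hμ₂ hf0 hf
  exact sq_div_two_le_one_sub_of_mulVec_eq_smul hπpos hPnn hProw hrev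
    (nonneg_of_mem_cutRatios (fun i => (hπpos i).le) hPnn hcond.1)
    (mul_sum_le_sum_cut_of_mem_lowerBounds hπpos hcond.2) hg hgpos hgsupp

/-- Cheeger upper bound for reversible chains: h²/2 ≤ 1 − μ₂, where h is the conductance
and μ₂ the second-largest eigenvalue. -/
theorem cheeger_upper {n : ℕ} (P : Matrix (Fin n) (Fin n) ℝ)
    (π : Fin n → ℝ) (hπpos : ∀ i, 0 < π i) (hπsum : ∑ i, π i = 1)
    (hPnn : ∀ i j, 0 ≤ P i j) (hProw : ∀ i, ∑ j, P i j = 1)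
    (hrev : ∀ i j, π i * P i j = π j * P j i)
    (hirr : ∀ i j, ∃ k : ℕ, 0 < (P ^ k) i j)
    (h : ℝ)
    (hcond : IsLeast {x : ℝ | ∃ S : Finset (Fin n), S.Nonempty ∧ (∑ i ∈ S, π i) ≤ 1/2 ∧
      x = (∑ i ∈ S, ∑ j ∈ Sᶜ, π i * P i j) / ∑ i ∈ S, π i} h)
    (μ₂ : ℝ)
    (hμ : IsGreatest {μ : ℝ | (∃ v : Fin n → ℝ, v ≠ 0 ∧ P.mulVec v = μ • v) ∧ μ ≠ 1} μ₂) :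
    h ^ 2 / 2 ≤ 1 - μ₂ :=
  cheeger_upper_general P π hπpos hπsum hPnn hProw hrev h hcond μ₂ hμ
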